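/- arXiv:2305.04712 — 2 statements merged into one kernel-verified Lean document; each statement's English description precedes it below -/
import Mathlib

section
/- Let X be a random vector in R^D with E||X||_2² ≤ M, let V_d be a fixed D×d matrix with orthonormal columns, and let V̂ be a random D×d matrix with orthonormal columns that is independent of X. Let Z ~ N(0, σ²I_D) be independent of (X, V̂). Then W₂(V̂ V̂^T X + Z, V_d V_d^T X + Z) ≤ (M · E||V̂ V̂^T − V_d V_d^T||_F²)^{1/2}, where ||·||_F is the Frobenius norm. -/
/-!
Realising both laws on the same probability space gives a coupling, so `W₂²` is at most
`E‖(V̂V̂ᵀ − V_dV_dᵀ)X‖²`, the noise `Z` cancelling. Cauchy–Schwarz row by row bounds this by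
`E[‖V̂V̂ᵀ − V_dV_dᵀ‖_F² ‖X‖²]`, which factors as `E‖V̂V̂ᵀ − V_dV_dᵀ‖_F² · E‖X‖²` since `V̂` and `X`
are independent.
-/

open MeasureTheory ProbabilityTheory Real
open scoped ENNReal NNReal RealInnerProductSpace

noncomputable section

/-- The isotropic Gaussian measure `N(0, σ²I_D)` on `ℝ^D`. -/
def stdGaussian (D : ℕ) (σ : ℝ) : Measure (EuclideanSpace ℝ (Fin D)) :=
  (Measure.pi fun _ : Fin D => gaussianReal 0 ⟨σ ^ 2, sq_nonneg σ⟩).map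
    (MeasurableEquiv.toLp 2 (Fin D → ℝ))

/-- Differential entropy `h(μ) = -∫ p log p` of a measure on `ℝ^D`
(with `p` the density w.r.t. Lebesgue measure). -/
def diffEntropy {D : ℕ} (μ : Measure (EuclideanSpace ℝ (Fin D))) : ℝ :=
  -∫ x, (μ.rnDeriv volume x).toReal * Real.log (μ.rnDeriv volume x).toReal

/-- The 2-Wasserstein distance `W₂(μ,ν) = (inf over couplings of E‖A-B‖²)^(1/2)`. -/
def W2 {D : ℕ} (μ ν : Measure (EuclideanSpace ℝ (Fin D))) : ℝ :=
  Real.sqrt (sInf {r : ℝ |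
    ∃ γ : Measure (EuclideanSpace ℝ (Fin D) × EuclideanSpace ℝ (Fin D)),
      IsProbabilityMeasure γ ∧ γ.map Prod.fst = μ ∧ γ.map Prod.snd = ν ∧
      r = ∫ p, ‖p.1 - p.2‖ ^ 2 ∂γ})

/-- The `D × D` projection matrix `V Vᵀ` associated with columns `V_1,...,V_d`. -/
def projMatrix {D d : ℕ} (V : Fin d → EuclideanSpace ℝ (Fin D)) : Matrix (Fin D) (Fin D) ℝ :=
  Matrix.of fun i k => ∑ j, V j i * V j k

/-- Squared Frobenius norm of a matrix. -/
def frobSq {D : ℕ} (A : Matrix (Fin D) (Fin D) ℝ) : ℝ := ∑ i, ∑ k, (A i k) ^ 2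

open Matrix

section

variable {D d : ℕ} {Ω : Type*} [MeasurableSpace Ω]

lemma frobSq_nonneg (A : Matrix (Fin D) (Fin D) ℝ) : 0 ≤ frobSq A :=
  Finset.sum_nonneg fun _ _ => Finset.sum_nonneg fun _ _ => sq_nonneg _

lemma sum_inner_smul_eq_projMatrix_mulVec (V : Fin d → EuclideanSpace ℝ (Fin D))
    (x : EuclideanSpace ℝ (Fin D)) :
    ∑ j, ⟪V j, x⟫ • V j = WithLp.toLp 2 (projMatrix V *ᵥ x.ofLp) := by
  ext i
  simp only [WithLp.ofLp_sum, WithLp.ofLp_smul, Finset.sum_apply, Pi.smul_apply, smul_eq_mul,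
    PiLp.inner_apply, RCLike.inner_apply, conj_trivial, projMatrix, mulVec, dotProduct, of_apply,
    Finset.sum_mul]
  rw [Finset.sum_comm]
  exact Finset.sum_congr rfl fun _ _ => Finset.sum_congr rfl fun _ _ => by ring

lemma norm_toLp_mulVec_sq_le (A : Matrix (Fin D) (Fin D) ℝ) (x : EuclideanSpace ℝ (Fin D)) :
    ‖WithLp.toLp 2 (A *ᵥ x.ofLp)‖ ^ 2 ≤ frobSq A * ‖x‖ ^ 2 := by
  simp only [EuclideanSpace.norm_sq_eq, Real.norm_eq_abs, sq_abs, frobSq, mulVec, dotProduct]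
  rw [Finset.sum_mul]
  exact Finset.sum_le_sum fun i _ => Finset.sum_mul_sq_le_sq_mul_sq _ _ _

lemma norm_sum_inner_smul_sub_sq_le (W V : Fin d → EuclideanSpace ℝ (Fin D))
    (x z : EuclideanSpace ℝ (Fin D)) :
    ‖(∑ j, ⟪W j, x⟫ • W j + z) - (∑ j, ⟪V j, x⟫ • V j + z)‖ ^ 2
      ≤ frobSq (projMatrix W - projMatrix V) * ‖x‖ ^ 2 := by
  rw [add_sub_add_right_eq_sub, sum_inner_smul_eq_projMatrix_mulVec,
    sum_inner_smul_eq_projMatrix_mulVec, ← WithLp.toLp_sub, ← sub_mulVec]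
  exact norm_toLp_mulVec_sq_le _ x

lemma abs_projMatrix_apply_le (V : Fin d → EuclideanSpace ℝ (Fin D)) (i k : Fin D) :
    |projMatrix V i k| ≤ ∑ j, ‖V j‖ ^ 2 := by
  have hcoord (j : Fin d) (l : Fin D) : |V j l| ≤ ‖V j‖ := by
    simpa only [Real.norm_eq_abs] using PiLp.norm_apply_le (V j) l
  calc |∑ j, V j i * V j k| ≤ ∑ j, |V j i| * |V j k| := by
        simpa only [abs_mul] using Finset.abs_sum_le_sum_abs (fun j => V j i * V j k) Finset.univ
    _ ≤ ∑ j, ‖V j‖ ^ 2 := Finset.sum_le_sum fun j _ => by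
        rw [sq]
        exact mul_le_mul (hcoord j i) (hcoord j k) (abs_nonneg _) (norm_nonneg _)

lemma frobSq_projMatrix_sub_le (V : Fin d → EuclideanSpace ℝ (Fin D))
    (B : Matrix (Fin D) (Fin D) ℝ) :
    frobSq (projMatrix V - B) ≤ ∑ i, ∑ k, (∑ j, ‖V j‖ ^ 2 + |B i k|) ^ 2 :=
  Finset.sum_le_sum fun i _ => Finset.sum_le_sum fun k _ => by
    rw [Matrix.sub_apply, ← sq_abs]
    gcongr
    exact (abs_sub _ _).trans (add_le_add_left (abs_projMatrix_apply_le V i k) _)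

lemma continuous_frobSq_projMatrix_sub (B : Matrix (Fin D) (Fin D) ℝ) :
    Continuous fun V : Fin d → EuclideanSpace ℝ (Fin D) => frobSq (projMatrix V - B) := by
  unfold frobSq projMatrix
  simp only [Matrix.sub_apply, of_apply]
  fun_prop

lemma W2_map_le_sqrt_integral_norm_sub_sq (P : Measure Ω) [IsProbabilityMeasure P]
    {A B : Ω → EuclideanSpace ℝ (Fin D)} (hA : Measurable A) (hB : Measurable B) :
    W2 (P.map A) (P.map B) ≤ √(∫ ω, ‖A ω - B ω‖ ^ 2 ∂P) := by
  have hAB : Measurable fun ω => (A ω, B ω) := hA.prodMk hB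
  refine Real.sqrt_le_sqrt (csInf_le ⟨0, ?_⟩ ⟨P.map fun ω => (A ω, B ω),
    Measure.isProbabilityMeasure_map hAB.aemeasurable, ?_, ?_, ?_⟩)
  · rintro r ⟨γ, -, -, -, rfl⟩
    exact integral_nonneg fun p => by positivity
  · rw [Measure.map_map measurable_fst hAB]; rfl
  · rw [Measure.map_map measurable_snd hAB]; rfl
  · rw [integral_map hAB.aemeasurable (by fun_prop)]

lemma integrable_frobSq_projMatrix_sub {P : Measure Ω} [IsFiniteMeasure P]
    {V : Ω → Fin d → EuclideanSpace ℝ (Fin D)} (hV : Measurable V)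
    (hV_norm : ∀ ω j, ‖V ω j‖ ≤ 1) (B : Matrix (Fin D) (Fin D) ℝ) :
    Integrable (fun ω => frobSq (projMatrix (V ω) - B)) P := by
  refine .of_bound ((continuous_frobSq_projMatrix_sub B).measurable.comp hV).aestronglyMeasurable
    (∑ i, ∑ k, (d + |B i k|) ^ 2) (ae_of_all _ fun ω => ?_)
  have hsum : ∑ j, ‖V ω j‖ ^ 2 ≤ d := by
    simpa using Finset.sum_le_sum fun j (_ : j ∈ Finset.univ) =>
      pow_le_one₀ (norm_nonneg _) (hV_norm ω j)
  rw [Real.norm_of_nonneg (frobSq_nonneg _)]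
  refine (frobSq_projMatrix_sub_le _ B).trans ?_
  gcongr

end

theorem wasserstein_estimated_projection_bound_general
    {D d : ℕ} {Ω : Type*} [MeasurableSpace Ω] (P : Measure Ω) [IsProbabilityMeasure P]
    (X Z : Ω → EuclideanSpace ℝ (Fin D)) (hX : Measurable X) (hZ : Measurable Z)
    (M : ℝ) (hX2 : Integrable (fun ω => ‖X ω‖ ^ 2) P) (hM : ∫ ω, ‖X ω‖ ^ 2 ∂P ≤ M)
    (Vd : Fin d → EuclideanSpace ℝ (Fin D))
    (Vhat : Ω → Fin d → EuclideanSpace ℝ (Fin D)) (hVhatMeas : Measurable Vhat)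
    (hVhatON : ∀ ω, Orthonormal ℝ (Vhat ω))
    (hVhatX : IndepFun Vhat X P) :
    W2 (P.map fun ω => (∑ j, ⟪Vhat ω j, X ω⟫ • Vhat ω j) + Z ω)
       (P.map fun ω => (∑ j, ⟪Vd j, X ω⟫ • Vd j) + Z ω)
      ≤ Real.sqrt (M * ∫ ω, frobSq (projMatrix (Vhat ω) - projMatrix Vd) ∂P) := by
  set F : Ω → ℝ := fun ω => frobSq (projMatrix (Vhat ω) - projMatrix Vd)
  have hF : Integrable F P :=
    integrable_frobSq_projMatrix_sub hVhatMeas (fun ω j => ((hVhatON ω).1 j).le) _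
  have hF_indep : IndepFun F (fun ω => ‖X ω‖ ^ 2) P :=
    hVhatX.comp (continuous_frobSq_projMatrix_sub (projMatrix Vd)).measurable
      (measurable_norm.pow_const 2)
  calc _ ≤ √(∫ ω, ‖((∑ j, ⟪Vhat ω j, X ω⟫ • Vhat ω j) + Z ω)
              - ((∑ j, ⟪Vd j, X ω⟫ • Vd j) + Z ω)‖ ^ 2 ∂P) :=
        W2_map_le_sqrt_integral_norm_sub_sq P (by fun_prop) (by fun_prop)
    _ ≤ √(∫ ω, F ω * ‖X ω‖ ^ 2 ∂P) :=
        Real.sqrt_le_sqrt <| integral_mono_of_nonneg (ae_of_all _ fun _ => by positivity)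
          (hF_indep.integrable_mul hF hX2)
          (ae_of_all _ fun ω => norm_sum_inner_smul_sub_sq_le _ _ _ _)
    _ = √((∫ ω, F ω ∂P) * ∫ ω, ‖X ω‖ ^ 2 ∂P) := by
        rw [hF_indep.integral_fun_mul_eq_mul_integral hF.aestronglyMeasurable
          hX2.aestronglyMeasurable]
    _ ≤ √(M * ∫ ω, F ω ∂P) := by
        rw [mul_comm M]
        exact Real.sqrt_le_sqrt <|
          mul_le_mul_of_nonneg_left hM (integral_nonneg fun ω => frobSq_nonneg _)

/-- for a fixed orthonormal `V_d` and a random orthonormal `V̂` independent of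
`X` (with `E‖X‖² ≤ M`) and `Z ~ N(0,σ²I_D)` independent of `(X,V̂)`,
`W₂(V̂V̂ᵀX + Z, V_dV_dᵀX + Z) ≤ (M · E‖V̂V̂ᵀ − V_dV_dᵀ‖_F²)^{1/2}`. -/
theorem wasserstein_estimated_projection_bound
    {D d : ℕ} {Ω : Type*} [MeasurableSpace Ω] (P : Measure Ω) [IsProbabilityMeasure P]
    (X Z : Ω → EuclideanSpace ℝ (Fin D)) (hX : Measurable X) (hZ : Measurable Z)
    (M : ℝ) (hX2 : Integrable (fun ω => ‖X ω‖ ^ 2) P) (hM : ∫ ω, ‖X ω‖ ^ 2 ∂P ≤ M)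
    (Vd : Fin d → EuclideanSpace ℝ (Fin D)) (hVdON : Orthonormal ℝ Vd)
    (Vhat : Ω → Fin d → EuclideanSpace ℝ (Fin D)) (hVhatMeas : Measurable Vhat)
    (hVhatON : ∀ ω, Orthonormal ℝ (Vhat ω))
    (hVhatX : IndepFun Vhat X P)
    (σ : ℝ) (hσ : 0 < σ) (hZlaw : P.map Z = stdGaussian D σ)
    (hZindep : IndepFun (fun ω => (X ω, Vhat ω)) Z P) :
    W2 (P.map fun ω => (∑ j, ⟪Vhat ω j, X ω⟫ • Vhat ω j) + Z ω)
       (P.map fun ω => (∑ j, ⟪Vd j, X ω⟫ • Vd j) + Z ω)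
      ≤ Real.sqrt (M * ∫ ω, frobSq (projMatrix (Vhat ω) - projMatrix Vd) ∂P) :=
  wasserstein_estimated_projection_bound_general P X Z hX hZ M hX2 hM Vd Vhat hVhatMeas hVhatON
    hVhatX
end
end

section
/- Let A be a D×D symmetric positive semidefinite matrix with eigenvalues λ_1 > ... > λ_D and let δ_d = (λ_d − λ_{d+1})/2 > 0 for some 1 ≤ d < D. Let B be a D×D symmetric matrix with ||B||_F < δ_d/2. Let P_d(A) and P_d(A+B) denote the orthogonal projection matrices onto the span of the top-d eigenvectors of A and of A+B respectively. Then ||P_d(A+B) − P_d(A)||_F ≤ ||B||_F / δ_d. -/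
/-!
Write `A = U diag(λ) Uᵀ` and `A + B = W diag(μ) Wᵀ` with orthogonal eigenvector matrices `U`, `W`.
The change of basis `X ↦ Uᵀ X W` preserves the Frobenius norm and turns `B` into the matrix with
entries `(μ_j - λ_i) (UᵀW)_ij` and `P_d(A+B) - P_d(A)` into the one with entries
`(π_j - π_i) (UᵀW)_ij`, where `π` is the indicator of the first `d` indices. Weyl's inequality
`|μ_k - λ_k| ≤ ‖B‖_F`, obtained from a unit vector in the span of the top `k + 1` eigenvectors of
one matrix and the bottom `D - k` of the other, gives `|μ_j - λ_i| ≥ 2δ_d - ‖B‖_F ≥ δ_d` whenever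
exactly one of `i`, `j` is below `d`. Comparing the two matrices entrywise yields
`δ_d ‖P_d(A+B) - P_d(A)‖_F ≤ ‖B‖_F`.
-/

open MeasureTheory ProbabilityTheory Real
open scoped ENNReal NNReal RealInnerProductSpace

noncomputable section

/-- Frobenius norm of a matrix. -/
def frobNorm {D : ℕ} (A : Matrix (Fin D) (Fin D) ℝ) : ℝ :=
  Real.sqrt (∑ i, ∑ k, (A i k) ^ 2)

open Matrix

attribute [local instance] Matrix.frobeniusNormedAddCommGroup

namespace Matrix

section Frobenius

variable {m n : Type*} [Fintype m] [Fintype n]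

theorem frobenius_norm_sq_eq_sum (M : Matrix m n ℝ) : ‖M‖ ^ 2 = ∑ i, ∑ j, M i j ^ 2 := by
  rw [frobenius_norm_def, ← Real.rpow_natCast, ← Real.rpow_mul (by positivity)]
  norm_num [Real.norm_eq_abs, sq_abs]

theorem frobenius_norm_sq_eq_trace (M : Matrix m n ℝ) : ‖M‖ ^ 2 = trace (M * Mᵀ) := by
  rw [frobenius_norm_sq_eq_sum]
  simp [trace, mul_apply, sq]

theorem frobenius_norm_transpose_mul_mul [DecidableEq m] [DecidableEq n]
    {U : Matrix m m ℝ} {W : Matrix n n ℝ} (hU : U ∈ orthogonalGroup m ℝ)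
    (hW : W ∈ orthogonalGroup n ℝ) (M : Matrix m n ℝ) : ‖Uᵀ * M * W‖ = ‖M‖ := by
  rw [mem_orthogonalGroup_iff] at hU hW
  refine (sq_eq_sq₀ (norm_nonneg _) (norm_nonneg _)).mp ?_
  rw [frobenius_norm_sq_eq_trace, frobenius_norm_sq_eq_trace, transpose_mul, transpose_mul,
    transpose_transpose]
  calc trace (Uᵀ * M * W * (Wᵀ * (Mᵀ * U))) = trace (U * Uᵀ * (M * (W * Wᵀ) * Mᵀ)) := by
        rw [Matrix.mul_assoc U, trace_mul_comm U]; simp only [Matrix.mul_assoc]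
    _ = trace (M * Mᵀ) := by rw [hU, hW, Matrix.mul_one, Matrix.one_mul]

theorem norm_toLp_mulVec_le (M : Matrix m n ℝ) (x : n → ℝ) :
    ‖WithLp.toLp 2 (M *ᵥ x)‖ ≤ ‖M‖ * ‖WithLp.toLp 2 x‖ :=
  calc ‖WithLp.toLp 2 (M *ᵥ x)‖ = ‖replicateCol (Fin 1) (M *ᵥ x)‖ :=
        (frobenius_norm_replicateCol _).symm
    _ ≤ ‖M‖ * ‖replicateCol (Fin 1) x‖ := by
        rw [replicateCol_mulVec]; exact frobenius_norm_mul _ _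
    _ = ‖M‖ * ‖WithLp.toLp 2 x‖ := congrArg _ (frobenius_norm_replicateCol _)

theorem abs_dotProduct_mulVec_le (M : Matrix n n ℝ) (x : n → ℝ) :
    |x ⬝ᵥ M *ᵥ x| ≤ ‖M‖ * (x ⬝ᵥ x) := by
  have hx : ‖WithLp.toLp 2 x‖ ^ 2 = x ⬝ᵥ x := by
    rw [EuclideanSpace.norm_sq_eq]; simp [dotProduct, sq]
  calc |x ⬝ᵥ M *ᵥ x| = |⟪WithLp.toLp 2 x, WithLp.toLp 2 (M *ᵥ x)⟫| := by
        rw [EuclideanSpace.inner_toLp_toLp, dotProduct_comm]; rfl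
    _ ≤ ‖WithLp.toLp 2 x‖ * ‖WithLp.toLp 2 (M *ᵥ x)‖ := abs_real_inner_le_norm _ _
    _ ≤ ‖WithLp.toLp 2 x‖ * (‖M‖ * ‖WithLp.toLp 2 x‖) := by gcongr; exact norm_toLp_mulVec_le M x
    _ = ‖M‖ * (x ⬝ᵥ x) := by rw [← hx]; ring

end Frobenius

theorem exists_mulVec_eq_zero_of_card_lt {m n K : Type*} [Fintype m] [Fintype n] [Field K]
    (G : Matrix m n K) (h : Fintype.card m < Fintype.card n) : ∃ x ≠ 0, G *ᵥ x = 0 := by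
  obtain ⟨x, hx, hx0⟩ := (Submodule.ne_bot_iff _).mp <|
    LinearMap.ker_ne_bot_of_finrank_lt (f := G.mulVecLin) (by simpa using h)
  exact ⟨x, hx0, hx⟩

variable {n : Type*} [Fintype n] [DecidableEq n] {M N P Q U W : Matrix n n ℝ}
  {lam mu pi rho : n → ℝ}

theorem transpose_mul_eq_diagonal_mul (hU : U ∈ orthogonalGroup n ℝ)
    (hM : M * U = U * diagonal lam) : Uᵀ * M = diagonal lam * Uᵀ := by
  calc Uᵀ * M = Uᵀ * (M * U) * Uᵀ := by
        rw [Matrix.mul_assoc, Matrix.mul_assoc, (mem_orthogonalGroup_iff _ _).mp hU, Matrix.mul_one]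
    _ = diagonal lam * Uᵀ := by
        rw [hM, ← Matrix.mul_assoc, (mem_orthogonalGroup_iff' _ _).mp hU, Matrix.one_mul]

section Rayleigh

theorem dotProduct_mulVec_eq_sum (hU : U ∈ orthogonalGroup n ℝ)
    (hM : M * U = U * diagonal lam) (x : n → ℝ) :
    x ⬝ᵥ M *ᵥ x = ∑ j, lam j * (Uᵀ *ᵥ x) j ^ 2 := by
  have hM' : M = U * (diagonal lam * Uᵀ) := by
    rw [← transpose_mul_eq_diagonal_mul hU hM, ← Matrix.mul_assoc,
      (mem_orthogonalGroup_iff _ _).mp hU, Matrix.one_mul]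
  rw [hM', ← mulVec_mulVec, dotProduct_mulVec, ← mulVec_transpose, ← mulVec_mulVec]
  simp only [dotProduct, mulVec_diagonal]
  exact Finset.sum_congr rfl fun j _ => by ring

theorem dotProduct_self_transpose_mulVec (hU : U ∈ orthogonalGroup n ℝ) (x : n → ℝ) :
    (Uᵀ *ᵥ x) ⬝ᵥ (Uᵀ *ᵥ x) = x ⬝ᵥ x := by
  rw [mulVec_transpose, ← dotProduct_mulVec, ← mulVec_transpose, mulVec_mulVec,
    (mem_orthogonalGroup_iff _ _).mp hU, one_mulVec]

variable {x : n → ℝ} {c : ℝ}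

theorem mul_dotProduct_self_le_dotProduct_mulVec (hU : U ∈ orthogonalGroup n ℝ)
    (hM : M * U = U * diagonal lam) (hc : ∀ j, (Uᵀ *ᵥ x) j ≠ 0 → c ≤ lam j) :
    c * (x ⬝ᵥ x) ≤ x ⬝ᵥ M *ᵥ x := by
  rw [dotProduct_mulVec_eq_sum hU hM, ← dotProduct_self_transpose_mulVec hU, dotProduct,
    Finset.mul_sum]
  refine Finset.sum_le_sum fun j _ => ?_
  by_cases hj : (Uᵀ *ᵥ x) j = 0
  · simp [hj]
  · rw [← sq]; exact mul_le_mul_of_nonneg_right (hc j hj) (sq_nonneg _)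

theorem dotProduct_mulVec_le_mul_dotProduct_self (hU : U ∈ orthogonalGroup n ℝ)
    (hM : M * U = U * diagonal lam) (hc : ∀ j, (Uᵀ *ᵥ x) j ≠ 0 → lam j ≤ c) :
    x ⬝ᵥ M *ᵥ x ≤ c * (x ⬝ᵥ x) := by
  rw [dotProduct_mulVec_eq_sum hU hM, ← dotProduct_self_transpose_mulVec hU, dotProduct,
    Finset.mul_sum]
  refine Finset.sum_le_sum fun j _ => ?_
  by_cases hj : (Uᵀ *ᵥ x) j = 0
  · simp [hj]
  · rw [← sq]; exact mul_le_mul_of_nonneg_right (hc j hj) (sq_nonneg _)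

end Rayleigh

theorem eigenvalue_sub_le_norm_sub [LinearOrder n] (hU : U ∈ orthogonalGroup n ℝ)
    (hW : W ∈ orthogonalGroup n ℝ) (hM : M * U = U * diagonal lam)
    (hN : N * W = W * diagonal mu) (hlam : Antitone lam) (hmu : Antitone mu) (k : n) :
    lam k - mu k ≤ ‖M - N‖ := by
  -- `G *ᵥ x = 0` makes `x` orthogonal to the eigenvectors of `M` after the `k`-th and to those
  -- of `N` before it: only `card n - 1` linear conditions.
  let G : Matrix {j // j ≠ k} n ℝ := of fun j => if k < j.1 then Uᵀ j else Wᵀ j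
  obtain ⟨x, hx0, hGx⟩ := G.exists_mulVec_eq_zero_of_card_lt <| by
    rw [Fintype.card_subtype_compl, Fintype.card_subtype_eq]
    exact Nat.sub_lt (Fintype.card_pos_iff.mpr ⟨k⟩) one_pos
  have hGx' : ∀ j (hj : j ≠ k), (G *ᵥ x) ⟨j, hj⟩ = 0 := fun j hj => congrFun hGx ⟨j, hj⟩
  have hlow : lam k * (x ⬝ᵥ x) ≤ x ⬝ᵥ M *ᵥ x := by
    refine mul_dotProduct_self_le_dotProduct_mulVec hU hM fun j hj =>
      hlam (not_lt.mp fun hkj => hj ?_)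
    simpa [G, mulVec, hkj] using hGx' j hkj.ne'
  have hup : x ⬝ᵥ N *ᵥ x ≤ mu k * (x ⬝ᵥ x) := by
    refine dotProduct_mulVec_le_mul_dotProduct_self hW hN fun j hj =>
      hmu (not_lt.mp fun hjk => hj ?_)
    simpa [G, mulVec, lt_asymm hjk] using hGx' j hjk.ne
  have hpert := abs_dotProduct_mulVec_le (M - N) x
  rw [sub_mulVec, dotProduct_sub] at hpert
  have hx : 0 < x ⬝ᵥ x :=
    lt_of_le_of_ne (Finset.sum_nonneg fun i _ => mul_self_nonneg (x i))
      (Ne.symm (dotProduct_self_eq_zero.not.mpr hx0))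
  refine le_of_mul_le_mul_right ?_ hx
  calc (lam k - mu k) * (x ⬝ᵥ x) ≤ x ⬝ᵥ M *ᵥ x - x ⬝ᵥ N *ᵥ x := by linarith
    _ ≤ ‖M - N‖ * (x ⬝ᵥ x) := (le_abs_self _).trans hpert

theorem transpose_mul_sub_mul_eq (hU : U ∈ orthogonalGroup n ℝ)
    (hM : M * U = U * diagonal lam) (hN : N * W = W * diagonal mu) :
    Uᵀ * (N - M) * W = of fun i j => (mu j - lam i) * (Uᵀ * W) i j := by
  rw [Matrix.mul_sub, Matrix.sub_mul, Matrix.mul_assoc, hN, transpose_mul_eq_diagonal_mul hU hM,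
    Matrix.mul_assoc, ← Matrix.mul_assoc]
  ext i j
  rw [Matrix.sub_apply, mul_diagonal, diagonal_mul, of_apply]
  ring

theorem mul_norm_sub_le_norm_sub {δ : ℝ} (hδ : 0 ≤ δ) (hU : U ∈ orthogonalGroup n ℝ)
    (hW : W ∈ orthogonalGroup n ℝ) (hM : M * U = U * diagonal lam)
    (hN : N * W = W * diagonal mu) (hP : P * U = U * diagonal pi)
    (hQ : Q * W = W * diagonal rho) (hgap : ∀ i j, δ * |rho j - pi i| ≤ |mu j - lam i|) :
    δ * ‖Q - P‖ ≤ ‖N - M‖ := by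
  rw [← frobenius_norm_transpose_mul_mul hU hW (Q - P),
    ← frobenius_norm_transpose_mul_mul hU hW (N - M), transpose_mul_sub_mul_eq hU hP hQ,
    transpose_mul_sub_mul_eq hU hM hN]
  refine le_of_pow_le_pow_left₀ two_ne_zero (norm_nonneg _) ?_
  rw [mul_pow, frobenius_norm_sq_eq_sum, frobenius_norm_sq_eq_sum, Finset.mul_sum]
  refine Finset.sum_le_sum fun i _ => ?_
  rw [Finset.mul_sum]
  refine Finset.sum_le_sum fun j _ => ?_
  rw [of_apply, of_apply, ← mul_pow, sq_le_sq, abs_mul, abs_mul, abs_mul, abs_of_nonneg hδ,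
    ← mul_assoc]
  exact mul_le_mul_of_nonneg_right (hgap i j) (abs_nonneg _)

end Matrix

theorem frobNorm_eq_norm {D : ℕ} (M : Matrix (Fin D) (Fin D) ℝ) : frobNorm M = ‖M‖ := by
  rw [frobNorm, ← frobenius_norm_sq_eq_sum, Real.sqrt_sq (norm_nonneg _)]

def colMatrix {m n : Type*} (V : n → EuclideanSpace ℝ m) : Matrix m n ℝ :=
  of fun i j => V j i

theorem colMatrix_mem_orthogonalGroup {n : Type*} [Fintype n] [DecidableEq n]
    {V : n → EuclideanSpace ℝ n} (hV : Orthonormal ℝ V) : colMatrix V ∈ orthogonalGroup n ℝ := by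
  rw [mem_orthogonalGroup_iff']
  ext j k
  rw [one_apply, ← orthonormal_iff_ite.mp hV j k]
  simp only [colMatrix, mul_apply, transpose_apply, of_apply, PiLp.inner_apply, RCLike.inner_apply,
    conj_trivial, mul_comm]

theorem mul_colMatrix_eq {m n : Type*} [Fintype m] [Fintype n] [DecidableEq n]
    {A : Matrix m m ℝ} {V : n → EuclideanSpace ℝ m} {lam : n → ℝ}
    (h : ∀ j i, ∑ k, A i k * V j k = lam j * V j i) :
    A * colMatrix V = colMatrix V * diagonal lam := by
  ext i j
  rw [mul_diagonal, mul_apply]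
  simp [colMatrix, h j i, mul_comm]

def topIndicator (D d : ℕ) : Fin D → ℝ := fun j => if (j : ℕ) < d then 1 else 0

theorem Fin.sum_castLE_eq_sum_ite {N d : ℕ} (h : d ≤ N) (f : Fin N → ℝ) :
    ∑ j : Fin d, f (Fin.castLE h j) = ∑ j : Fin N, if (j : ℕ) < d then f j else 0 := by
  rw [← Finset.sum_filter]
  refine Finset.sum_nbij (Fin.castLE h) (by simp) (Fin.castLE_injective h).injOn ?_
    fun _ _ => rfl
  intro i hi
  exact ⟨⟨i, by simpa using hi⟩, by simp, rfl⟩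

theorem projMatrix_castLE_mul_colMatrix {D d : ℕ} (h : d ≤ D)
    {V : Fin D → EuclideanSpace ℝ (Fin D)} (hV : Orthonormal ℝ V) :
    projMatrix (fun j : Fin d => V (Fin.castLE h j)) * colMatrix V
      = colMatrix V * diagonal (topIndicator D d) := by
  have hP : projMatrix (fun j : Fin d => V (Fin.castLE h j))
      = colMatrix V * diagonal (topIndicator D d) * (colMatrix V)ᵀ := by
    ext i k
    rw [projMatrix, of_apply, Fin.sum_castLE_eq_sum_ite h fun j => V j i * V j k, mul_apply]
    refine Finset.sum_congr rfl fun j _ => ?_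
    simp only [mul_diagonal, transpose_apply, colMatrix, of_apply, topIndicator]
    split_ifs <;> ring
  rw [hP, Matrix.mul_assoc, (mem_orthogonalGroup_iff' _ _).mp (colMatrix_mem_orthogonalGroup hV),
    Matrix.mul_one]

theorem mul_abs_topIndicator_sub_le {D d : ℕ} (hdD : d < D) {lam mu : Fin D → ℝ}
    (hlam : Antitone lam) {ε δ : ℝ} (hmu : ∀ k, |mu k - lam k| ≤ ε)
    (hgap : δ + ε ≤ lam ⟨d - 1, by omega⟩ - lam ⟨d, hdD⟩) (i j : Fin D) :
    δ * |topIndicator D d j - topIndicator D d i| ≤ |mu j - lam i| := by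
  have htop : ∀ i : Fin D, (i : ℕ) < d → lam ⟨d - 1, by omega⟩ ≤ lam i := fun i hi =>
    hlam (Fin.le_def.mpr (by simp; omega))
  have hbot : ∀ i : Fin D, ¬ (i : ℕ) < d → lam i ≤ lam ⟨d, hdD⟩ := fun i hi =>
    hlam (Fin.le_def.mpr (by simp; omega))
  have hj := abs_le.mp (hmu j)
  simp only [topIndicator]
  split_ifs with hjd hid hid
  · simp
  · rw [sub_zero, abs_one, mul_one]
    exact le_abs.mpr (Or.inl (by linarith [htop j hjd, hbot i hid]))
  · rw [zero_sub, abs_neg, abs_one, mul_one]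
    exact le_abs.mpr (Or.inr (by linarith [htop i hid, hbot j hjd]))
  · simp

/-- eigenprojection perturbation / Davis–Kahan type bound: if `A` is symmetric
positive semidefinite with distinct eigenvalues `λ_1 > ... > λ_D`, eigengap
`δ_d = (λ_d − λ_{d+1})/2 > 0`, and `B` is symmetric with `‖B‖_F < δ_d/2`, then the orthogonal
projections onto the top-`d` eigenspaces of `A + B` and of `A` satisfy
`‖P_d(A+B) − P_d(A)‖_F ≤ ‖B‖_F / δ_d`. -/
theorem eigenprojection_perturbation
    {D : ℕ} (A B : Matrix (Fin D) (Fin D) ℝ)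
    (lamA : Fin D → ℝ) (VA : Fin D → EuclideanSpace ℝ (Fin D))
    (hVAON : Orthonormal ℝ VA)
    (heigA : ∀ j i : Fin D, ∑ k, A i k * VA j k = lamA j * VA j i)
    (hAstrict : ∀ i j : Fin D, i < j → lamA j < lamA i)
    (lamB : Fin D → ℝ) (VB : Fin D → EuclideanSpace ℝ (Fin D))
    (hVBON : Orthonormal ℝ VB)
    (heigB : ∀ j i : Fin D, ∑ k, (A + B) i k * VB j k = lamB j * VB j i)
    (hBdesc : ∀ i j : Fin D, i ≤ j → lamB j ≤ lamB i)
    (d : ℕ) (hd : 1 ≤ d) (hdD : d < D)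
    (δd : ℝ) (hδd : δd = (lamA ⟨d - 1, by omega⟩ - lamA ⟨d, hdD⟩) / 2) (hδdpos : 0 < δd)
    (hB : frobNorm B < δd / 2) :
    frobNorm (projMatrix (fun j : Fin d => VB (Fin.castLE hdD.le j))
        - projMatrix (fun j : Fin d => VA (Fin.castLE hdD.le j)))
      ≤ frobNorm B / δd := by
  have hUA := colMatrix_mem_orthogonalGroup hVAON
  have hUB := colMatrix_mem_orthogonalGroup hVBON
  have hA := mul_colMatrix_eq heigA
  have hAB := mul_colMatrix_eq heigB
  have hlamA : Antitone lamA := StrictAnti.antitone hAstrict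
  have hweyl : ∀ k, |lamB k - lamA k| ≤ ‖B‖ := fun k => abs_sub_le_iff.mpr
    ⟨by simpa using eigenvalue_sub_le_norm_sub hUB hUA hAB hA hBdesc hlamA k,
      by simpa using eigenvalue_sub_le_norm_sub hUA hUB hA hAB hlamA hBdesc k⟩
  simp only [frobNorm_eq_norm] at hB ⊢
  have key := mul_norm_sub_le_norm_sub hδdpos.le hUA hUB hA hAB
    (projMatrix_castLE_mul_colMatrix hdD.le hVAON) (projMatrix_castLE_mul_colMatrix hdD.le hVBON)
    (mul_abs_topIndicator_sub_le hdD hlamA hweyl (by linarith))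
  rw [add_sub_cancel_left] at key
  rwa [le_div_iff₀ hδdpos, mul_comm]
end
end
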